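/- With the setting of the previous greedy construction (fixed job order π, release times r, forbidden regions F, unit process times): if the greedy schedule t violates some deadline (t_j > d_j for some j), then no feasible schedule with job order π exists, i.e., for every schedule t' respecting order π, the release times, disjointness, and forbidden regions, some job violates its deadline. -/
import Mathlib


/-- The least start time `x ≥ s` avoiding all open forbidden regions `(a γ, b γ)`. -/
noncomputable def adjustStart {Γ : Type*} (a b : Γ → ℝ) (s : ℝ) : ℝ :=
  sInf {x : ℝ | s ≤ x ∧ ∀ γ : Γ, x ∉ Set.Ioo (a γ) (b γ)}

/-- A schedule is feasible (ignoring deadlines) for the given order: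
release times respected, unit spacing between consecutive jobs, and no
start time inside a forbidden region. -/
def FeasibleSchedule {n : ℕ} {Γ : Type*} (r : Fin n → ℝ) (a b : Γ → ℝ)
    (t : Fin n → ℝ) : Prop :=
  (∀ j, r j ≤ t j) ∧
  (∀ i : ℕ, ∀ h : i + 1 < n,
    t ⟨i, Nat.lt_of_succ_lt h⟩ + 1 ≤ t ⟨i + 1, h⟩) ∧
  (∀ j, ∀ γ : Γ, t j ∉ Set.Ioo (a γ) (b γ))

lemma adjustStart_le {Γ : Type*} (a b : Γ → ℝ) (s x : ℝ)
    (hs : s ≤ x) (hx : ∀ γ : Γ, x ∉ Set.Ioo (a γ) (b γ)) :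
    adjustStart a b s ≤ x :=
  csInf_le ⟨s, fun y hy => hy.1⟩ ⟨hs, hx⟩

theorem greedy_deadline_violation_infeasible {n : ℕ} {Γ : Type*} [Fintype Γ]
    (r d : Fin n → ℝ) (a b : Γ → ℝ)
    (t : Fin n → ℝ)
    (ht0 : ∀ h : 0 < n, t ⟨0, h⟩ = adjustStart a b (r ⟨0, h⟩))
    (htsucc : ∀ i : ℕ, ∀ h : i + 1 < n,
      t ⟨i + 1, h⟩ =
        adjustStart a b (max (r ⟨i + 1, h⟩) (t ⟨i, Nat.lt_of_succ_lt h⟩ + 1)))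
    (hviol : ∃ j, d j < t j) :
    ∀ t' : Fin n → ℝ, FeasibleSchedule r a b t' → ∃ j, d j < t' j := by
  intro t' ⟨hr, hsp, hf⟩
  have key : ∀ i : ℕ, ∀ h : i < n, t ⟨i, h⟩ ≤ t' ⟨i, h⟩ := by
    intro i
    induction i with
    | zero =>
      intro h
      rw [ht0 h]
      exact adjustStart_le a b _ _ (hr _) (hf _)
    | succ i ih =>
      intro h
      rw [htsucc i h]
      refine adjustStart_le a b _ _ ?_ (hf _)
      refine max_le (hr _) ?_
      have := ih (Nat.lt_of_succ_lt h)
      linarith [hsp i h]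
  obtain ⟨j, hj⟩ := hviol
  exact ⟨j, lt_of_lt_of_le hj (by have := key j.1 j.2; simpa using this)⟩
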